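/- arXiv:1601.07590 — 3 statements merged into one kernel-verified Lean document; each statement's English description precedes it below -/
import Mathlib

section
/- For any permutation σ on {1,...,N}, the iterated commutator of a bilinear operator BT satisfies [σ(b⃗), BT]_{σ(β⃗)} = [b⃗, BT]_{β⃗}, where b⃗ = (b₁,...,b_N) are functions, β⃗ ∈ {1,2}^N, σ(b⃗) = (b_{σ(1)},...,b_{σ(N)}), and σ(β⃗) = (β_{σ(1)},...,β_{σ(N)}). -/
noncomputable section

variable {α : Type*}

/-- The commutator of a bilinear operator `T` with a function `b` in the first
(`β = true`, i.e. "1") or second (`β = false`, i.e. "2") entry. -/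
def biComm (b : α → ℝ) (β : Bool) (T : (α → ℝ) → (α → ℝ) → (α → ℝ)) :
    (α → ℝ) → (α → ℝ) → (α → ℝ) :=
  fun f g x =>
    if β then b x * T f g x - T (fun y => b y * f y) g x
    else b x * T f g x - T f (fun y => b y * g y) x

/-- The iterated commutator `[b_N,[b_{N-1},...,[b₁,T]_{β₁}...]_{β_{N-1}}]_{β_N}`,
built from inner (`b₁`) to outer (`b_N`). -/
def itComm : (N : ℕ) → (Fin N → (α → ℝ)) → (Fin N → Bool) →
    ((α → ℝ) → (α → ℝ) → (α → ℝ)) → ((α → ℝ) → (α → ℝ) → (α → ℝ))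
  | 0, _, _, T => T
  | N + 1, b, β, T =>
      biComm (b (Fin.last N)) (β (Fin.last N))
        (itComm N (fun i => b i.castSucc) (fun i => β i.castSucc) T)

lemma mul_lam (b b' f : α → ℝ) :
    (fun y => b y * (b' y * f y)) = (fun y => b' y * (b y * f y)) := by
  funext y; ring

lemma biComm_comm (b b' : α → ℝ) (β β' : Bool) (T : (α → ℝ) → (α → ℝ) → (α → ℝ)) :
    biComm b β (biComm b' β' T) = biComm b' β' (biComm b β T) := by
  funext f g x
  cases β <;> cases β' <;>
    simp only [biComm, if_true, if_false, Bool.false_eq_true, ite_false, ite_true] <;>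
    first
      | (rw [mul_lam]; ring)
      | ring

def step (T : (α → ℝ) → (α → ℝ) → (α → ℝ)) (p : (α → ℝ) × Bool) :
    (α → ℝ) → (α → ℝ) → (α → ℝ) := biComm p.1 p.2 T

lemma itComm_eq_foldl (N : ℕ) (b : Fin N → (α → ℝ)) (β : Fin N → Bool)
    (T : (α → ℝ) → (α → ℝ) → (α → ℝ)) :
    itComm N b β T = List.foldl step T (List.ofFn (fun i => (b i, β i))) := by
  induction N with
  | zero => simp [itComm]
  | succ n ih =>
      rw [List.ofFn_succ' (fun i => (b i, β i)), List.concat_eq_append, List.foldl_concat]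
      simp only [itComm, step, ih]

/-- For any permutation σ of `{1,…,N}`, `[σ(b⃗),BT]_{σ(β⃗)} = [b⃗,BT]_{β⃗}`. -/
theorem itComm_perm_invariant {N : ℕ} (b : Fin N → (α → ℝ)) (β : Fin N → Bool)
    (T : (α → ℝ) → (α → ℝ) → (α → ℝ)) (σ : Equiv.Perm (Fin N)) :
    itComm N (fun i => b (σ i)) (fun i => β (σ i)) T = itComm N b β T := by
  rw [itComm_eq_foldl, itComm_eq_foldl]
  haveI : RightCommutative (step (α := α)) := ⟨fun T p q => biComm_comm _ _ _ _ _⟩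
  have hσ : (List.map σ (List.finRange N)).Perm (List.finRange N) :=
    List.perm_of_nodup_nodup_toFinset_eq
      ((List.nodup_finRange N).map σ.injective) (List.nodup_finRange N)
      (by ext x; simp [List.mem_map]; exact ⟨σ.symm x, by simp⟩)
  have hperm : (List.ofFn (fun i => (b (σ i), β (σ i)))).Perm
      (List.ofFn (fun i => (b i, β i))) := by
    rw [List.ofFn_eq_map, List.ofFn_eq_map]
    have : (fun i => (b (σ i), β (σ i))) = (fun i => (b i, β i)) ∘ σ := rfl
    rw [this, ← List.map_map]
    exact hσ.map _
  exact hperm.foldl_eq T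
end
end

section
/- Given any cube Q in ℝⁿ, there exists t ∈ {0,1/3}ⁿ and a cube Q_t in the shifted dyadic grid 𝒟^t such that Q ⊆ Q_t and ℓ(Q_t) ≤ 6 ℓ(Q). -/
open Set

noncomputable section

/-- An axis-parallel cube in `ℝⁿ` (half-open), given by its corner and side length. -/
structure Cube (n : ℕ) where
  c : Fin n → ℝ
  len : ℝ
  len_pos : 0 < len

/-- The underlying set of a cube. -/
def Cube.set {n : ℕ} (Q : Cube n) : Set (Fin n → ℝ) :=
  Set.univ.pi fun i => Set.Ico (Q.c i) (Q.c i + Q.len)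

/-- The cube `2^{-k}([0,1)ⁿ + m + (-1)^k t)` of the shifted dyadic grid `𝒟^t`. -/
def shiftedCube (n : ℕ) (t : Fin n → ℝ) (k : ℤ) (m : Fin n → ℤ) : Cube n :=
  ⟨fun i => (2 : ℝ) ^ (-k) * ((m i : ℝ) + (-1 : ℝ) ^ k * t i), (2 : ℝ) ^ (-k),
    by positivity⟩

/-- one-dimensional key lemma -/
lemma one_dim (s len c ε : ℝ) (hs : 0 < s) (hlen : 0 < len) (h3 : 3 * len ≤ s)
    (hε : ε = 1 ∨ ε = -1) :
    ∃ τ : ℝ, (τ = 0 ∨ τ = 1/3) ∧ ∃ m : ℤ,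
      s * ((m : ℝ) + ε * τ) ≤ c ∧ c + len ≤ s * ((m : ℝ) + ε * τ) + s := by
  set m := ⌊c / s⌋ with hm
  have h1 : (m : ℝ) * s ≤ c := by
    rw [← le_div_iff₀ hs]; exact Int.floor_le _
  have h2 : c < ((m : ℝ) + 1) * s := by
    rw [← div_lt_iff₀ hs]; exact Int.lt_floor_add_one _
  by_cases hcase : c + len ≤ s * m + s
  · exact ⟨0, Or.inl rfl, m, by constructor <;> nlinarith⟩
  · push_neg at hcase
    rcases hε with h | h
    · exact ⟨1/3, Or.inr rfl, m, by subst h; constructor <;> nlinarith⟩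
    · refine ⟨1/3, Or.inr rfl, m + 1, ?_⟩
      subst h; push_cast; constructor <;> nlinarith

/-- Lerner's lemma: every cube `Q ⊆ ℝⁿ` is contained in a cube `Q_t` of a shifted
dyadic grid `𝒟^t`, `t ∈ {0,1/3}ⁿ`, with `ℓ(Q_t) ≤ 6 ℓ(Q)`. -/
theorem exists_shifted_dyadic_cube (n : ℕ) (Q : Cube n) :
    ∃ t : Fin n → ℝ, (∀ i, t i = 0 ∨ t i = 1/3) ∧
      ∃ (k : ℤ) (m : Fin n → ℤ),
        Q.set ⊆ (shiftedCube n t k m).set ∧ (2 : ℝ) ^ (-k) ≤ 6 * Q.len := by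
  have hlen := Q.len_pos
  set j : ℤ := Int.clog 2 (3 * Q.len) with hj
  set k : ℤ := -j with hk
  have hs0 : (0:ℝ) < (2:ℝ) ^ j := by positivity
  have hneg : -k = j := by rw [hk, neg_neg]
  have hL : (0:ℝ) < 3 * Q.len := by linarith
  have h1 : 3 * Q.len ≤ (2:ℝ) ^ j := Int.self_le_zpow_clog (by norm_num) _
  have h2 : (2:ℝ) ^ (j - 1) < 3 * Q.len := Int.zpow_pred_clog_lt_self (by norm_num) hL
  have hupper : (2:ℝ) ^ j ≤ 6 * Q.len := by
    have : (2:ℝ) ^ j = (2:ℝ) ^ (j - 1) * 2 := by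
      rw [← zpow_add_one₀ (by norm_num : (2:ℝ) ≠ 0)]; ring_nf
    nlinarith
  set ε : ℝ := (-1 : ℝ) ^ k with hε
  have hεval : ε = 1 ∨ ε = -1 := by
    have : ε * ε = 1 := by
      rw [hε, ← mul_zpow]; norm_num
    exact mul_self_eq_one_iff.mp this
  have H : ∀ i, ∃ τ : ℝ, (τ = 0 ∨ τ = 1/3) ∧ ∃ m : ℤ,
      (2:ℝ) ^ j * ((m : ℝ) + ε * τ) ≤ Q.c i ∧
      Q.c i + Q.len ≤ (2:ℝ) ^ j * ((m : ℝ) + ε * τ) + (2:ℝ) ^ j :=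
    fun i => one_dim _ _ _ _ hs0 hlen h1 hεval
  choose t ht m hm using H
  refine ⟨t, ht, k, m, ?_, by rw [hneg]; exact hupper⟩
  intro x hx
  simp only [Cube.set, shiftedCube, Set.mem_pi, Set.mem_univ, forall_true_left,
    Set.mem_Ico] at hx ⊢
  intro i
  obtain ⟨hx1, hx2⟩ := hx i
  obtain ⟨hQ1, hQ2⟩ := hm i
  rw [hneg]
  constructor
  · linarith
  · linarith
end
end

section
/- Suppose 0 ≤ α < n, 1 < r, s with 1/r + 1/s = 1. Then for every x ∈ ℝⁿ and all locally integrable f, g, M^{r,s}_α(f,g)(x) ≤ 6^{n−α} Σ_{t ∈ {0,1/3}ⁿ} M^{r,s,𝒟^t}_α(f,g)(x), where the sum is over the 2ⁿ shifted dyadic grids. -/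
/-!
Given a cube `Q`, pick the dyadic scale `L = 2^{-k}` with `3ℓ(Q) ≤ L < 6ℓ(Q)`. In each
coordinate the side of `Q` either fits in a cell of the unshifted lattice `Lℤ`, or it starts
within `ℓ(Q) ≤ L/3` of the end of such a cell, and then fits in a cell of the lattice shifted
by `±L/3`; the choices over the coordinates give a cube `R ⊇ Q` of one of the `2ⁿ` grids with
`ℓ(R) ≤ 6ℓ(Q)`. Averages over `Q` are at most `|R|/|Q|` times averages over `R`, and because
`1/r + 1/s = 1` the two losses multiply to exactly `|R|/|Q|`, which the factor `|Q|^{α/n}`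
converts into `6^{n-α}|R|^{α/n}`.
-/

open MeasureTheory ENNReal Set

noncomputable section

/-- The volume `|Q| = ℓ(Q)ⁿ` of a cube. -/
def Cube.vol {n : ℕ} (Q : Cube n) : ℝ := Q.len ^ n

/-- The average `⨍_Q f` of a real function over a cube. -/
def cavg {n : ℕ} (Q : Cube n) (f : (Fin n → ℝ) → ℝ) : ℝ :=
  (Q.vol)⁻¹ * ∫ x in Q.set, f x

/-- The average `⨍_Q f` of an `ℝ≥0∞`-valued function over a cube. -/
def eavg {n : ℕ} (Q : Cube n) (f : (Fin n → ℝ) → ℝ≥0∞) : ℝ≥0∞ :=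
  (ENNReal.ofReal Q.vol)⁻¹ * ∫⁻ x in Q.set, f x

/-- The Luxemburg (Orlicz) average `‖f‖_{Φ,Q}`. -/
def orliczAvg {n : ℕ} (Φ : ℝ → ℝ) (f : (Fin n → ℝ) → ℝ) (Q : Cube n) : ℝ :=
  sInf {lam : ℝ | 0 < lam ∧ cavg Q (fun x => Φ (|f x| / lam)) ≤ 1}


/-- The bilinear fractional maximal operator over all cubes. -/
def biMax (n : ℕ) (α r s : ℝ) (f g : (Fin n → ℝ) → ℝ) (x : Fin n → ℝ) : ℝ≥0∞ :=
  ⨆ (Q : Cube n) (_ : x ∈ Q.set),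
    ENNReal.ofReal Q.vol ^ (α / n) *
      (eavg Q fun y => ENNReal.ofReal (|f y| ^ r)) ^ (1 / r) *
      (eavg Q fun y => ENNReal.ofReal (|g y| ^ s)) ^ (1 / s)

/-- The bilinear fractional maximal operator over the shifted dyadic grid `𝒟^t`. -/
def biMaxDyadic (n : ℕ) (α r s : ℝ) (t : Fin n → ℝ) (f g : (Fin n → ℝ) → ℝ)
    (x : Fin n → ℝ) : ℝ≥0∞ :=
  ⨆ (k : ℤ) (m : Fin n → ℤ) (_ : x ∈ (shiftedCube n t k m).set),
    ENNReal.ofReal (shiftedCube n t k m).vol ^ (α / n) *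
      (eavg (shiftedCube n t k m) fun y => ENNReal.ofReal (|f y| ^ r)) ^ (1 / r) *
      (eavg (shiftedCube n t k m) fun y => ENNReal.ofReal (|g y| ^ s)) ^ (1 / s)

lemma exists_Ico_subset_shifted_Ico {L l σ : ℝ} (hL : 0 < L) (hl : 3 * l ≤ L)
    (hσ : σ = 1 ∨ σ = -1) (a : ℝ) :
    ∃ (b : Bool) (m : ℤ),
      Ico a (a + l) ⊆ Ico (L * (m + σ * if b then 1 / 3 else 0))
        (L * (m + σ * if b then 1 / 3 else 0) + L) := by
  set q := ⌊a / L⌋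
  have hqa : q * L ≤ a := (le_div_iff₀ hL).1 (Int.floor_le _)
  have haq : a < (q + 1) * L := (div_lt_iff₀ hL).1 (Int.lt_floor_add_one _)
  by_cases hfit : a + l ≤ (q + 1) * L
  · exact ⟨false, q, Ico_subset_Ico (by simp; linarith) (by simp; linarith)⟩
  rcases hσ with rfl | rfl
  · exact ⟨true, q, Ico_subset_Ico (by simp; linarith) (by simp; linarith)⟩
  · exact ⟨true, q + 1,
      Ico_subset_Ico (by push_cast; simp; linarith) (by push_cast; simp; linarith)⟩

lemma Cube.exists_shiftedCube_superset {n : ℕ} (Q : Cube n) :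
    ∃ (τ : Fin n → Bool) (k : ℤ) (m : Fin n → ℤ),
      Q.set ⊆ (shiftedCube n (fun i => if τ i then 1 / 3 else 0) k m).set ∧
      (shiftedCube n (fun i => if τ i then 1 / 3 else 0) k m).len ≤ 6 * Q.len := by
  obtain ⟨j, hj, hj'⟩ := exists_mem_Ioc_zpow (mul_pos three_pos Q.len_pos) one_lt_two
  have hL : 3 * Q.len ≤ (2 : ℝ) ^ (-(-(j + 1))) := by rw [neg_neg]; linarith
  have hsign : (-1 : ℝ) ^ (-(j + 1)) = 1 ∨ (-1 : ℝ) ^ (-(j + 1)) = -1 :=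
    (Int.even_or_odd _).imp Even.neg_one_zpow Odd.neg_one_zpow
  choose τ m hm using fun i => exists_Ico_subset_shifted_Ico (by positivity) hL hsign (Q.c i)
  refine ⟨τ, -(j + 1), m, pi_mono fun i _ => hm i, ?_⟩
  have : (2 : ℝ) ^ (j + 1) = 2 * 2 ^ j := by rw [zpow_add_one₀ two_ne_zero, mul_comm]
  simp only [shiftedCube, neg_neg]
  linarith

lemma Cube.vol_pos {n : ℕ} (Q : Cube n) : 0 < Q.vol := pow_pos Q.len_pos n

lemma eavg_le_mul_eavg_of_subset {n : ℕ} {Q R : Cube n} (h : Q.set ⊆ R.set)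
    (F : (Fin n → ℝ) → ℝ≥0∞) :
    eavg Q F ≤ ENNReal.ofReal R.vol / ENNReal.ofReal Q.vol * eavg R F := by
  have hR : ENNReal.ofReal R.vol ≠ 0 := (ENNReal.ofReal_pos.2 R.vol_pos).ne'
  calc eavg Q F ≤ (ENNReal.ofReal Q.vol)⁻¹ * ∫⁻ y in R.set, F y := by
        unfold eavg; gcongr
    _ = ENNReal.ofReal R.vol / ENNReal.ofReal Q.vol * eavg R F := by
        rw [eavg, div_eq_mul_inv, mul_comm (ENNReal.ofReal R.vol), mul_assoc,
          ← mul_assoc _ _⁻¹, ENNReal.mul_inv_cancel hR ENNReal.ofReal_ne_top, one_mul]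

lemma Real.rpow_mul_div_le {p v w C : ℝ} (hp : p ≤ 1) (hv : 0 < v) (hw : 0 < w)
    (hwv : w ≤ C * v) : v ^ p * (w / v) ≤ C ^ (1 - p) * w ^ p := by
  have hsplit : v ^ p * (w / v) = (w / v) ^ (1 - p) * w ^ p := by
    rw [Real.div_rpow hw.le hv.le, Real.rpow_sub hw, Real.rpow_sub hv, Real.rpow_one,
      Real.rpow_one]
    field_simp
  rw [hsplit]
  gcongr
  exact (div_le_iff₀ hv).2 hwv

lemma vol_rpow_mul_eavg_rpow_le {n : ℕ} (hn : 0 < n) {α p q C : ℝ} (hαn : α ≤ n)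
    (hp : 0 ≤ p) (hq : 0 ≤ q) (hpq : p + q = 1) {Q R : Cube n} (hQR : Q.set ⊆ R.set)
    (hlen : R.len ≤ C * Q.len) (F G : (Fin n → ℝ) → ℝ≥0∞) :
    ENNReal.ofReal Q.vol ^ (α / n) * eavg Q F ^ p * eavg Q G ^ q
      ≤ ENNReal.ofReal (C ^ ((n : ℝ) - α)) *
          (ENNReal.ofReal R.vol ^ (α / n) * eavg R F ^ p * eavg R G ^ q) := by
  have hQ := Q.vol_pos
  have hR := R.vol_pos
  have hC : 0 < C := pos_of_mul_pos_left (R.len_pos.trans_le hlen) Q.len_pos.le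
  set c := ENNReal.ofReal R.vol / ENNReal.ofReal Q.vol with hc_def
  have hc0 : c ≠ 0 := (ENNReal.div_pos (ENNReal.ofReal_pos.2 hR).ne' ofReal_ne_top).ne'
  have hctop : c ≠ ⊤ := (ENNReal.div_lt_top ofReal_ne_top (ENNReal.ofReal_pos.2 hQ).ne').ne
  have hc : c ^ p * c ^ q = c := by
    rw [← ENNReal.rpow_add _ _ hc0 hctop, hpq, ENNReal.rpow_one]
  have hvol : R.vol ≤ C ^ n * Q.vol := by
    rw [Cube.vol, Cube.vol, ← mul_pow]
    exact pow_le_pow_left₀ R.len_pos.le hlen n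
  have hexp : (C ^ n) ^ (1 - α / n) = C ^ ((n : ℝ) - α) := by
    rw [← Real.rpow_natCast, ← Real.rpow_mul hC.le]
    congr 1
    field_simp
  have hkey : ENNReal.ofReal Q.vol ^ (α / n) * c
      ≤ ENNReal.ofReal (C ^ ((n : ℝ) - α)) * ENNReal.ofReal R.vol ^ (α / n) := by
    rw [hc_def, ← ENNReal.ofReal_div_of_pos hQ, ENNReal.ofReal_rpow_of_pos hQ,
      ENNReal.ofReal_rpow_of_pos hR, ← ENNReal.ofReal_mul (by positivity),
      ← ENNReal.ofReal_mul (by positivity), ← hexp]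
    exact ENNReal.ofReal_le_ofReal (Real.rpow_mul_div_le
      ((div_le_one (Nat.cast_pos.2 hn)).2 hαn) hQ hR hvol)
  calc ENNReal.ofReal Q.vol ^ (α / n) * eavg Q F ^ p * eavg Q G ^ q
      ≤ ENNReal.ofReal Q.vol ^ (α / n) * (c * eavg R F) ^ p * (c * eavg R G) ^ q := by
        gcongr <;> exact eavg_le_mul_eavg_of_subset hQR _
    _ = ENNReal.ofReal Q.vol ^ (α / n) * (c ^ p * c ^ q) * (eavg R F ^ p * eavg R G ^ q) := by
        rw [ENNReal.mul_rpow_of_nonneg _ _ hp, ENNReal.mul_rpow_of_nonneg _ _ hq]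
        ring
    _ ≤ ENNReal.ofReal (C ^ ((n : ℝ) - α)) * ENNReal.ofReal R.vol ^ (α / n) *
          (eavg R F ^ p * eavg R G ^ q) := by
        rw [hc]; gcongr
    _ = _ := by ring

lemma le_biMaxDyadic {n : ℕ} {α r s : ℝ} {t : Fin n → ℝ} {f g : (Fin n → ℝ) → ℝ}
    {x : Fin n → ℝ} {k : ℤ} {m : Fin n → ℤ} (hx : x ∈ (shiftedCube n t k m).set) :
    ENNReal.ofReal (shiftedCube n t k m).vol ^ (α / n) *
        (eavg (shiftedCube n t k m) fun y => ENNReal.ofReal (|f y| ^ r)) ^ (1 / r) *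
        (eavg (shiftedCube n t k m) fun y => ENNReal.ofReal (|g y| ^ s)) ^ (1 / s)
      ≤ biMaxDyadic n α r s t f g x :=
  le_iSup₂_of_le k m (le_iSup_of_le hx le_rfl)

theorem biMax_le_sum_dyadic_general (n : ℕ) (hn : 0 < n) (α r s : ℝ)
    (hαn : α < n) (hr : 1 < r) (hrs : 1 / r + 1 / s = 1)
    (f g : (Fin n → ℝ) → ℝ) (x : Fin n → ℝ) :
    biMax n α r s f g x
      ≤ ENNReal.ofReal ((6 : ℝ) ^ ((n : ℝ) - α)) *
          ∑ τ : Fin n → Bool,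
            biMaxDyadic n α r s (fun i => if τ i then 1/3 else 0) f g x := by
  have hr' : 1 / r < 1 := (div_lt_one (by linarith)).2 hr
  refine iSup₂_le fun Q hxQ => ?_
  obtain ⟨τ, k, m, hQR, hlen⟩ := Q.exists_shiftedCube_superset
  calc _ ≤ _ :=
        vol_rpow_mul_eavg_rpow_le hn hαn.le (by positivity) (by linarith) hrs hQR hlen _ _
    _ ≤ _ := by
      gcongr
      calc _ ≤ biMaxDyadic n α r s (fun i => if τ i then 1/3 else 0) f g x :=
            le_biMaxDyadic (hQR hxQ)
        _ ≤ _ := by apply Finset.single_le_sum_of_canonicallyOrdered (Finset.mem_univ τ)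

/-- Pointwise control of `M^{r,s}_α` by the `2ⁿ` shifted dyadic maximal operators:
`M^{r,s}_α(f,g)(x) ≤ 6^{n-α} Σ_{t ∈ {0,1/3}ⁿ} M^{r,s,𝒟ᵗ}_α(f,g)(x)`. -/
theorem biMax_le_sum_dyadic (n : ℕ) (hn : 0 < n) (α r s : ℝ)
    (hα0 : 0 ≤ α) (hαn : α < n) (hr : 1 < r) (hs : 1 < s) (hrs : 1 / r + 1 / s = 1)
    (f g : (Fin n → ℝ) → ℝ) (hf : Measurable f) (hg : Measurable g) (x : Fin n → ℝ) :
    biMax n α r s f g x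
      ≤ ENNReal.ofReal ((6 : ℝ) ^ ((n : ℝ) - α)) *
          ∑ τ : Fin n → Bool,
            biMaxDyadic n α r s (fun i => if τ i then 1/3 else 0) f g x :=
  biMax_le_sum_dyadic_general n hn α r s hαn hr hrs f g x
end
end
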